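/- The graph G₇ is an IP-SEG graph. Consequently, since G₇ is not an IP-SEG* graph, the class of IP-SEG* graphs is properly contained in the class of IP-SEG graphs: every IP-SEG* graph is an IP-SEG graph, and there exists an IP-SEG graph that is not an IP-SEG* graph. -/

import Mathlib

/-- A segment between the horizontal lines `L₁ = {y = 1}` and `L₂ = {y = 2}`,
given by its two endpoints, each of which lies on `L₁` or `L₂`. -/
structure IPSeg where
  p : ℝ × ℝ
  q : ℝ × ℝ
  hp : p.2 = 1 ∨ p.2 = 2
  hq : q.2 = 1 ∨ q.2 = 2

namespace IPSeg

/-- The closed line segment in `ℝ²` determined by the two endpoints. -/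
def carrier (s : IPSeg) : Set (ℝ × ℝ) := segment ℝ s.p s.q

/-- An interval segment: both endpoints on the same horizontal line. -/
def IsInterval (s : IPSeg) : Prop := s.p.2 = s.q.2

/-- A permutation segment: one endpoint on each horizontal line. -/
def IsPermutation (s : IPSeg) : Prop := s.p.2 ≠ s.q.2

/-- The (set of) endpoints of the segment. -/
def endpoints (s : IPSeg) : Set (ℝ × ℝ) := {s.p, s.q}

end IPSeg

/-- An IP-SEG model of a graph: distinct vertices are adjacent iff their segments meet. -/
def IsIPSEGModel {V : Type*} (G : SimpleGraph V) (s : V → IPSeg) : Prop :=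
  ∀ u v : V, u ≠ v → (G.Adj u v ↔ ((s u).carrier ∩ (s v).carrier).Nonempty)

/-- An IP-SEG* model: an IP-SEG model in which all interval segments lie on one line. -/
def IsIPSEGStarModel {V : Type*} (G : SimpleGraph V) (s : V → IPSeg) : Prop :=
  IsIPSEGModel G s ∧
    ∃ c : ℝ, (c = 1 ∨ c = 2) ∧ ∀ v : V, (s v).IsInterval → (s v).p.2 = c

/-- The graph `Gₙ` on `3n` vertices: a chordless cycle on the vertices `(i, 0)`
(`i ∈ ZMod n`), together with a pendant vertex `(i, 1)` attached to `(i, 0)` and a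
pendant vertex `(i, 2)` attached to `(i, 1)`, for each `i`. -/
def GGraph (n : ℕ) : SimpleGraph (ZMod n × Fin 3) :=
  SimpleGraph.fromRel (fun x y =>
    (x.2 = 0 ∧ y.2 = 0 ∧ y.1 = x.1 + 1) ∨
    (x.2 = 0 ∧ y.2 = 1 ∧ y.1 = x.1) ∨
    (x.2 = 1 ∧ y.2 = 2 ∧ y.1 = x.1))

/-!
The IP-SEG model of `G₇` has integer coordinates and is checked by evaluating an exact integer
criterion for two such segments to meet.

For the converse, project every segment of an IP-SEG* model to the line carrying its intervals.
Two non-adjacent vertices are then strictly ordered from left to right (two permutation segments at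
both ends), and this order is transitive except across an interval lying between two permutation
segments. Such an interval trapped between adjacent `p` and `q` traps every neighbour avoiding `p` and
`q`. In `G₇`, an interval `v₃` trapped between `v₀` and `v₁` thus makes `v₃, v₄, v₅, w₄` trapped
intervals, and `v₄` with the legs `v₃ v₂`, `v₅ v₆`, `w₄ z₄` is an induced subdivided claw of
intervals, which cannot be realised on a line. Up to reflection, this shows that if `vᵢ` lies left of
`vᵢ₊₂` then `vᵢ₊₁` lies left of `vᵢ₊₃`; since `2` generates `ℤ/7`, the order closes into a cycle.
-/

open Set

section TwoLines

variable {E : Type*} [AddCommGroup E] [Module ℝ E] {k k' : ℝ}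

lemma mem_segment_iff_min_le_max {x y z : ℝ} :
    z ∈ segment ℝ x y ↔ min x y ≤ z ∧ z ≤ max x y := by
  rw [segment_eq_uIcc, uIcc, mem_Icc]

lemma zero_mem_segment_iff_mul_nonpos {a b : ℝ} : (0 : ℝ) ∈ segment ℝ a b ↔ a * b ≤ 0 := by
  rw [segment_eq_uIcc, mem_uIcc, mul_nonpos_iff]
  tauto

lemma segment_inter_segment_nonempty_iff_min_le_max (x₁ x₂ y₁ y₂ : ℝ) :
    (segment ℝ x₁ x₂ ∩ segment ℝ y₁ y₂).Nonempty ↔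
      min x₁ x₂ ≤ max y₁ y₂ ∧ min y₁ y₂ ≤ max x₁ x₂ := by
  simp only [segment_eq_uIcc, uIcc, Icc_inter_Icc, nonempty_Icc, sup_le_iff, le_inf_iff]
  constructor
  · rintro ⟨⟨-, h₁⟩, h₂, -⟩
    exact ⟨h₂, h₁⟩
  · rintro ⟨h₁, h₂⟩
    exact ⟨⟨min_le_max, h₂⟩, h₁, min_le_max⟩

lemma segment_inter_segment_nonempty_iff_of_snd_eq (x₁ x₂ y₁ y₂ : E) (k : ℝ) :
    (segment ℝ (x₁, k) (x₂, k) ∩ segment ℝ (y₁, k) (y₂, k)).Nonempty ↔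
      (segment ℝ x₁ x₂ ∩ segment ℝ y₁ y₂).Nonempty := by
  rw [← Prod.image_mk_segment_left, ← Prod.image_mk_segment_left,
    ← image_inter (Prod.mk_left_injective k), image_nonempty]

lemma segment_inter_segment_eq_empty_of_snd_ne (hk : k ≠ k') (x₁ x₂ y₁ y₂ : E) :
    segment ℝ (x₁, k) (x₂, k) ∩ segment ℝ (y₁, k') (y₂, k') = ∅ := by
  rw [← Prod.image_mk_segment_left, ← Prod.image_mk_segment_left, eq_empty_iff_forall_notMem]
  rintro _ ⟨⟨x, -, rfl⟩, ⟨y, -, hy⟩⟩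
  exact hk (congrArg Prod.snd hy).symm

lemma eq_of_mem_segment_of_snd_eq (hk : k ≠ k') {f t : E} {z : E × ℝ}
    (hz : z ∈ segment ℝ (f, k) (t, k')) (hzk : z.2 = k) : z = (f, k) := by
  obtain ⟨a, b, -, -, hab, rfl⟩ := hz
  have hb : b = 0 := by
    have h : a * k + b * k' = k := hzk
    have : b * (k' - k) = 0 := by linear_combination h - k * hab
    exact (mul_eq_zero.1 this).resolve_right (sub_ne_zero.2 hk.symm)
  obtain rfl : a = 1 := by linarith
  simp [hb]

lemma segment_inter_segment_nonempty_iff_mem (hk : k ≠ k') (x₁ x₂ f t : E) :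
    (segment ℝ (x₁, k) (x₂, k) ∩ segment ℝ (f, k) (t, k')).Nonempty ↔ f ∈ segment ℝ x₁ x₂ := by
  rw [← Prod.image_mk_segment_left]
  constructor
  · rintro ⟨_, ⟨x, hx, rfl⟩, hz⟩
    cases eq_of_mem_segment_of_snd_eq hk hz rfl
    exact hx
  · exact fun hf => ⟨(f, k), ⟨f, hf, rfl⟩, left_mem_segment ℝ _ _⟩

/-- A common point has the same height, hence the same barycentric coordinates, on both segments. -/
lemma segment_inter_segment_nonempty_iff_zero_mem (hk : k ≠ k') (f t f' t' : E) :
    (segment ℝ (f, k) (t, k') ∩ segment ℝ (f', k) (t', k')).Nonempty ↔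
      (0 : E) ∈ segment ℝ (f - f') (t - t') := by
  constructor
  · rintro ⟨_, ⟨a, b, ha, hb, hab, rfl⟩, ⟨a', b', -, -, hab', h⟩⟩
    obtain ⟨h₁, h₂⟩ := Prod.ext_iff.1 h
    simp only [Prod.smul_mk, Prod.fst_add, Prod.snd_add, smul_eq_mul] at h₁ h₂
    have hbb : b' = b := by
      have : (b' - b) * (k' - k) = 0 := by linear_combination h₂ + k * hab - k * hab'
      exact sub_eq_zero.1 ((mul_eq_zero.1 this).resolve_right (sub_ne_zero.2 hk.symm))
    have haa : a' = a := by linarith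
    rw [haa, hbb] at h₁
    refine ⟨a, b, ha, hb, hab, ?_⟩
    rw [smul_sub, smul_sub, sub_add_sub_comm, h₁, sub_self]
  · rintro ⟨a, b, ha, hb, hab, h⟩
    refine ⟨a • (f, k) + b • (t, k'), ⟨a, b, ha, hb, hab, rfl⟩, ⟨a, b, ha, hb, hab, ?_⟩⟩
    have h' : a • f + b • t = a • f' + b • t' := sub_eq_zero.1 (by rw [← h]; module)
    simp [h']

end TwoLines

theorem not_forall_lt_add {M α : Type*} [AddMonoid M] [Preorder α] {a : M}
    (ha : IsOfFinAddOrder a) (f : M → α) : ¬∀ x, f x < f (x + a) := by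
  intro h
  have key (n : ℕ) : f 0 < f ((n + 1) • a) := by
    induction n with
    | zero => simpa using h 0
    | succ n ih => exact ih.trans (by simpa [succ_nsmul _ (n + 1)] using h ((n + 1) • a))
  have := key (addOrderOf a - 1)
  rw [Nat.sub_add_cancel ha.addOrderOf_pos, addOrderOf_nsmul_eq_zero] at this
  exact lt_irrefl _ this

/-- An IP-SEG* model seen from the line carrying its interval segments: `[left v, right v]` is the
trace of the segment of `v` on that line (a single point for a permutation segment), and `top v` is
the abscissa of the other endpoint of a permutation segment. -/
structure StarCoords {V : Type*} (G : SimpleGraph V) where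
  IsPerm : V → Prop
  left : V → ℝ
  right : V → ℝ
  top : V → ℝ
  left_le_right (v : V) : left v ≤ right v
  left_eq_right {v : V} : IsPerm v → left v = right v
  adj_iff_of_isPerm {u v : V} : u ≠ v → IsPerm u → IsPerm v →
    (G.Adj u v ↔ (left u - left v) * (top u - top v) ≤ 0)
  adj_iff_of_not_isPerm {u v : V} : u ≠ v → ¬IsPerm u →
    (G.Adj u v ↔ left u ≤ right v ∧ left v ≤ right u)

namespace StarCoords

variable {V W : Type*} {G : SimpleGraph V} {H : SimpleGraph W} (C : StarCoords G) {u v w : V}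

lemma adj_iff_of_not_isPerm' (huv : u ≠ v) (hv : ¬C.IsPerm v) :
    G.Adj u v ↔ C.left u ≤ C.right v ∧ C.left v ≤ C.right u := by
  rw [G.adj_comm, C.adj_iff_of_not_isPerm huv.symm hv, and_comm]

def LeftOf (u v : V) : Prop :=
  C.right u < C.left v ∧ (C.IsPerm u → C.IsPerm v → C.top u < C.top v)

lemma leftOf_or_leftOf (h : Gᶜ.Adj u v) : C.LeftOf u v ∨ C.LeftOf v u := by
  obtain ⟨huv, hnadj⟩ := (SimpleGraph.compl_adj _ _ _).1 h
  by_cases hu : C.IsPerm u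
  · by_cases hv : C.IsPerm v
    · rw [C.adj_iff_of_isPerm huv hu hv, not_le] at hnadj
      rw [LeftOf, LeftOf, ← C.left_eq_right hu, ← C.left_eq_right hv]
      rcases mul_pos_iff.1 hnadj with ⟨h₁, h₂⟩ | ⟨h₁, h₂⟩
      · exact .inr ⟨by linarith, fun _ _ => by linarith⟩
      · exact .inl ⟨by linarith, fun _ _ => by linarith⟩
    · rw [C.adj_iff_of_not_isPerm' huv hv, not_and_or, not_le, not_le] at hnadj
      exact hnadj.symm.imp (fun h => ⟨h, fun _ h' => absurd h' hv⟩)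
        fun h => ⟨h, fun h' _ => absurd h' hv⟩
  · rw [C.adj_iff_of_not_isPerm huv hu, not_and_or, not_le, not_le] at hnadj
    exact hnadj.symm.imp (fun h => ⟨h, fun h' _ => absurd h' hu⟩)
      fun h => ⟨h, fun _ h' => absurd h' hu⟩

lemma not_leftOf_of_adj (h : G.Adj u v) : ¬C.LeftOf u v := by
  rintro ⟨hlt, htop⟩
  by_cases hu : C.IsPerm u
  · by_cases hv : C.IsPerm v
    · rw [C.adj_iff_of_isPerm (G.ne_of_adj h) hu hv, C.left_eq_right hu] at h
      nlinarith [htop hu hv]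
    · linarith [((C.adj_iff_of_not_isPerm' (G.ne_of_adj h) hv).1 h).2]
  · linarith [((C.adj_iff_of_not_isPerm (G.ne_of_adj h) hu).1 h).2]

variable {C} in
lemma LeftOf.trans (huw : C.LeftOf u w) (hwv : C.LeftOf w v)
    (hw : C.IsPerm u → C.IsPerm v → C.IsPerm w) : C.LeftOf u v :=
  ⟨by linarith [huw.1, hwv.1, C.left_le_right w],
    fun hu hv => (huw.2 hu (hw hu hv)).trans (hwv.2 (hw hu hv) hv)⟩

def comap (f : H ↪g G) : StarCoords H where
  IsPerm := C.IsPerm ∘ f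
  left := C.left ∘ f
  right := C.right ∘ f
  top := C.top ∘ f
  left_le_right v := C.left_le_right (f v)
  left_eq_right := C.left_eq_right
  adj_iff_of_isPerm huv := by
    rw [← f.map_adj_iff]
    exact C.adj_iff_of_isPerm (f.injective.ne huv)
  adj_iff_of_not_isPerm huv := by
    rw [← f.map_adj_iff]
    exact C.adj_iff_of_not_isPerm (f.injective.ne huv)

@[simp]
lemma leftOf_comap (f : H ↪g G) {u v : W} : (C.comap f).LeftOf u v ↔ C.LeftOf (f u) (f v) :=
  Iff.rfl

def Trapped (p q x : V) : Prop :=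
  ¬C.IsPerm x ∧ C.LeftOf p x ∧ C.LeftOf x q

variable {C} in
/-- If `y` were a permutation segment, `p < y < q` would give `p < q`. -/
lemma Trapped.of_adj {p q x y : V} (hpq : G.Adj p q) (hx : C.Trapped p q x) (hxy : G.Adj x y)
    (hnp : Gᶜ.Adj p y) (hnq : Gᶜ.Adj y q) : C.Trapped p q y := by
  obtain ⟨hxy₁, hxy₂⟩ := (C.adj_iff_of_not_isPerm (G.ne_of_adj hxy) hx.1).1 hxy
  have hpy : C.LeftOf p y := (C.leftOf_or_leftOf hnp).resolve_right fun h => by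
    linarith [h.1, hx.2.1.1, C.left_le_right p]
  have hyq : C.LeftOf y q := (C.leftOf_or_leftOf hnq).resolve_right fun h => by
    linarith [h.1, hx.2.2.1, C.left_le_right q]
  exact ⟨fun hy => C.not_leftOf_of_adj hpq (hpy.trans hyq fun _ _ => hy), hpy, hyq⟩

end StarCoords

lemma eq_three_sub_of_ne {c y : ℝ} (hc : c = 1 ∨ c = 2) (hy : y = 1 ∨ y = 2) (h : y ≠ c) :
    y = 3 - c := by
  rcases hc with rfl | rfl <;> rcases hy with rfl | rfl <;> norm_num at *

namespace IPSeg

variable (s : IPSeg)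

noncomputable def foot (c : ℝ) : ℝ := if s.p.2 = c then s.p.1 else s.q.1

noncomputable def tip (c : ℝ) : ℝ := if s.p.2 = c then s.q.1 else s.p.1

lemma carrier_eq_of_isInterval {c : ℝ} (hs : s.IsInterval) (hc : s.p.2 = c) :
    s.carrier = segment ℝ (s.p.1, c) (s.q.1, c) :=
  congrArg₂ _ (Prod.ext rfl hc) (Prod.ext rfl (hs ▸ hc))

lemma carrier_eq_of_isPermutation {c : ℝ} (hc : c = 1 ∨ c = 2) (hs : s.IsPermutation) :
    s.carrier = segment ℝ (s.foot c, c) (s.tip c, 3 - c) := by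
  unfold carrier foot tip
  by_cases hp : s.p.2 = c
  · have hq : s.q.2 = 3 - c := eq_three_sub_of_ne hc s.hq fun h => hs (hp.trans h.symm)
    rw [if_pos hp, if_pos hp]
    exact congrArg₂ _ (Prod.ext rfl hp) (Prod.ext rfl hq)
  · have hp' := eq_three_sub_of_ne hc s.hp hp
    have hq : s.q.2 = c := by_contra fun h => hs (hp'.trans (eq_three_sub_of_ne hc s.hq h).symm)
    rw [if_neg hp, if_neg hp, segment_symm]
    exact congrArg₂ _ (Prod.ext rfl hq) (Prod.ext rfl hp')

end IPSeg

lemma IsIPSEGStarModel.nonempty_starCoords {V : Type*} {G : SimpleGraph V} {s : V → IPSeg}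
    (h : IsIPSEGStarModel G s) : Nonempty (StarCoords G) := by
  classical
  obtain ⟨hG, c, hc, hline⟩ := h
  have hc' : c ≠ 3 - c := by rcases hc with rfl | rfl <;> norm_num
  have hI (v) (hv : ¬(s v).IsPermutation) :=
    (s v).carrier_eq_of_isInterval (not_not.1 hv) (hline v (not_not.1 hv))
  have hP (v) (hv : (s v).IsPermutation) := (s v).carrier_eq_of_isPermutation hc hv
  exact ⟨{
    IsPerm v := (s v).IsPermutation
    left v := if (s v).IsPermutation then (s v).foot c else min (s v).p.1 (s v).q.1
    right v := if (s v).IsPermutation then (s v).foot c else max (s v).p.1 (s v).q.1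
    top v := (s v).tip c
    left_le_right v := by split_ifs; exacts [le_rfl, min_le_max]
    left_eq_right hv := by simp only [if_pos hv]
    adj_iff_of_isPerm huv hu hv := by
      rw [hG _ _ huv, hP _ hu, hP _ hv, segment_inter_segment_nonempty_iff_zero_mem hc',
        zero_mem_segment_iff_mul_nonpos, if_pos hu, if_pos hv]
    adj_iff_of_not_isPerm {u v} huv hu := by
      rw [hG _ _ huv, hI _ hu, if_neg hu, if_neg hu]
      by_cases hv : (s v).IsPermutation
      · rw [hP _ hv, segment_inter_segment_nonempty_iff_mem hc', if_pos hv, if_pos hv,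
          mem_segment_iff_min_le_max]
      · rw [hI _ hv, segment_inter_segment_nonempty_iff_of_snd_eq,
          segment_inter_segment_nonempty_iff_min_le_max, if_neg hv, if_neg hv] }⟩

/-- The centre is `none`; the `i`-th leg is the path `none – some (i, 0) – some (i, 1)`. -/
def subdividedClaw : SimpleGraph (Option (Fin 3 × Fin 2)) :=
  SimpleGraph.fromRel fun x y =>
    (x = none ∧ ∃ i, y = some (i, 0)) ∨ ∃ i, x = some (i, 0) ∧ y = some (i, 1)

instance : DecidableRel subdividedClaw.Adj :=
  fun _ _ => decidable_of_iff' _ (SimpleGraph.fromRel_adj _ _ _)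

namespace StarCoords

variable (C : StarCoords subdividedClaw)

/-- The middle interval of leg `i` lies inside the centre interval, so the end of leg `i` would
meet the centre. -/
lemma not_leftOf_leg_of_leftOf (hc : ¬C.IsPerm none) {i : Fin 3} (hi : ¬C.IsPerm (some (i, 0)))
    {j k : Fin 3} (hji : C.LeftOf (some (j, 0)) (some (i, 0))) :
    ¬C.LeftOf (some (i, 0)) (some (k, 0)) := by
  intro hik
  have adj_centre (x) (hx : x ≠ none) := C.adj_iff_of_not_isPerm (u := none) (v := x) hx.symm hc
  have hj := ((adj_centre (some (j, 0)) (by simp)).1 (by simp [subdividedClaw])).1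
  have hk := ((adj_centre (some (k, 0)) (by simp)).1 (by simp [subdividedClaw])).2
  have hend := (C.adj_iff_of_not_isPerm (v := some (i, 1)) (by simp) hi).1
    (by simp [subdividedClaw])
  have hnadj : ¬subdividedClaw.Adj none (some (i, 1)) := by simp [subdividedClaw]
  exact hnadj ((adj_centre _ (by simp)).2
    ⟨by linarith [hji.1, hend.1], by linarith [hik.1, hend.2]⟩)

lemma isPerm_subdividedClaw : C.IsPerm none ∨ ∃ i, C.IsPerm (some (i, 0)) := by
  by_contra! ⟨hc, hm⟩
  have H {i j k : Fin 3} := C.not_leftOf_leg_of_leftOf hc (hm i) (j := j) (k := k)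
  have legs : ∀ i j : Fin 3, i ≠ j → subdividedClawᶜ.Adj (some (i, 0)) (some (j, 0)) := by
    decide
  rcases C.leftOf_or_leftOf (legs 0 1 (by decide)) with h01 | h10 <;>
    rcases C.leftOf_or_leftOf (legs 1 2 (by decide)) with h12 | h21
  · exact H h01 h12
  · rcases C.leftOf_or_leftOf (legs 0 2 (by decide)) with h02 | h20
    · exact H h02 h21
    · exact H h20 h01
  · rcases C.leftOf_or_leftOf (legs 0 2 (by decide)) with h02 | h20
    · exact H h10 h02
    · exact H h12 h20
  · exact H h21 h10

end StarCoords

instance (n : ℕ) : DecidableRel (GGraph n).Adj :=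
  fun _ _ => decidable_of_iff' _ (SimpleGraph.fromRel_adj _ _ _)

inductive IntSeg
  | low (a b : ℤ)
  | high (a b : ℤ)
  | perm (f t : ℤ)

namespace IntSeg

def toIPSeg : IntSeg → IPSeg
  | low a b => ⟨(a, 1), (b, 1), .inl rfl, .inl rfl⟩
  | high a b => ⟨(a, 2), (b, 2), .inr rfl, .inr rfl⟩
  | perm f t => ⟨(f, 1), (t, 2), .inl rfl, .inr rfl⟩

def Meets : IntSeg → IntSeg → Prop
  | low a b, low a' b' | high a b, high a' b' => min a b ≤ max a' b' ∧ min a' b' ≤ max a b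
  | low a b, perm f _ | perm f _, low a b | high a b, perm _ f | perm _ f, high a b =>
      min a b ≤ f ∧ f ≤ max a b
  | perm f t, perm f' t' => (f - f') * (t - t') ≤ 0
  | _, _ => False

instance : ∀ x y, Decidable (Meets x y) := by
  intro x y
  cases x <;> cases y <;> unfold Meets <;> infer_instance

lemma carrier_inter_nonempty_iff (x y : IntSeg) :
    ((toIPSeg x).carrier ∩ (toIPSeg y).carrier).Nonempty ↔ Meets x y := by
  have h12 : (1 : ℝ) ≠ 2 := by norm_num
  cases x <;> cases y <;> simp only [toIPSeg, IPSeg.carrier, Meets]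
  case low.low | high.high =>
    rw [segment_inter_segment_nonempty_iff_of_snd_eq, segment_inter_segment_nonempty_iff_min_le_max]
    norm_cast
  case low.high => simp [segment_inter_segment_eq_empty_of_snd_ne h12]
  case high.low => simp [segment_inter_segment_eq_empty_of_snd_ne h12.symm]
  case low.perm =>
    rw [segment_inter_segment_nonempty_iff_mem h12, mem_segment_iff_min_le_max]
    norm_cast
  case perm.low =>
    rw [inter_comm, segment_inter_segment_nonempty_iff_mem h12, mem_segment_iff_min_le_max]
    norm_cast
  case high.perm =>
    rw [segment_symm ℝ (_, 1), segment_inter_segment_nonempty_iff_mem h12.symm,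
      mem_segment_iff_min_le_max]
    norm_cast
  case perm.high =>
    rw [inter_comm, segment_symm ℝ (_, 1), segment_inter_segment_nonempty_iff_mem h12.symm,
      mem_segment_iff_min_le_max]
    norm_cast
  case perm.perm =>
    rw [segment_inter_segment_nonempty_iff_zero_mem h12, zero_mem_segment_iff_mul_nonpos]
    norm_cast

end IntSeg

-- Row `k` lists the segments of the vertices `(i, k)`; `ZMod 7` is `Fin 7` by definition.
def g7Segments : Fin 3 → Fin 7 → IntSeg := ![
  ![.low 0 20, .low 16 40, .perm 30 88, .perm 60 78, .high 76 80, .perm (-10) 77, .perm 4 40],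
  ![.low (-6) 2, .low 36 52, .high 86 90, .low 58 66, .high 75 76, .low (-14) (-8), .high 38 42],
  ![.low (-7) (-6), .low 42 50, .high 90 94, .low 66 72, .high 73 75, .low (-18) (-14),
    .high 34 38]]

lemma adj_iff_meets_g7Segments : ∀ u v : ZMod 7 × Fin 3, u ≠ v →
    ((GGraph 7).Adj u v ↔ (g7Segments u.2 u.1).Meets (g7Segments v.2 v.1)) := by
  decide

theorem isIPSEGModel_g7Segments :
    IsIPSEGModel (GGraph 7) fun v => (g7Segments v.2 v.1).toIPSeg := fun u v huv => by
  rw [IntSeg.carrier_inter_nonempty_iff]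
  exact adj_iff_meets_g7Segments u v huv

def GGraph.reflect (n : ℕ) (c : ZMod n) : GGraph n ≃g GGraph n where
  toFun v := (c - v.1, v.2)
  invFun v := (c - v.1, v.2)
  left_inv v := by simp
  right_inv v := by simp
  map_rel_iff' := by
    have sub_eq_sub_add_one (a b : ZMod n) : c - b = c - a + 1 ↔ a = b + 1 := by
      constructor <;> intro h <;> linear_combination h
    simp only [GGraph, SimpleGraph.fromRel_adj, Equiv.coe_fn_mk, ne_eq, sub_right_inj,
      sub_eq_sub_add_one, Prod.ext_iff]
    grind

@[simp]
lemma GGraph.reflect_apply (n : ℕ) (c : ZMod n) (v : ZMod n × Fin 3) :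
    GGraph.reflect n c v = (c - v.1, v.2) :=
  rfl

def clawG7 : subdividedClaw ↪g GGraph 7 where
  toFun x := x.elim (4, 0) fun l => ![![(3, 0), (2, 0)], ![(5, 0), (6, 0)], ![(4, 1), (4, 2)]] l.1 l.2
  inj' := by decide
  map_rel_iff' := by decide

namespace StarCoords

variable (C : StarCoords (GGraph 7))

lemma not_leftOf_three_one (h₀₃ : C.LeftOf (0, 0) (3, 0)) : ¬C.LeftOf (3, 0) (1, 0) := by
  intro h₃₁
  have h01 : (GGraph 7).Adj (0, 0) (1, 0) := by decide
  by_cases h3 : C.IsPerm (3, 0)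
  · exact C.not_leftOf_of_adj h01 (h₀₃.trans h₃₁ fun _ _ => h3)
  have t3 : C.Trapped (0, 0) (1, 0) (3, 0) := ⟨h3, h₀₃, h₃₁⟩
  have t4 := t3.of_adj (y := (4, 0)) h01 (by decide) (by decide) (by decide)
  have t5 := t4.of_adj (y := (5, 0)) h01 (by decide) (by decide) (by decide)
  have tw := t4.of_adj (y := (4, 1)) h01 (by decide) (by decide) (by decide)
  rcases (C.comap clawG7).isPerm_subdividedClaw with h | ⟨i, hi⟩
  · exact t4.1 h
  · fin_cases i
    exacts [t3.1 hi, t5.1 hi, tw.1 hi]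

lemma not_leftOf_add_two (i : ZMod 7) (h : C.LeftOf (i + 3, 0) (i, 0)) :
    ¬C.LeftOf (i, 0) (i + 2, 0) := by
  have e : i + 3 - 1 = i + 2 := by ring
  simpa [e] using (C.comap (GGraph.reflect 7 (i + 3)).toEmbedding).not_leftOf_three_one
    (by simpa using h)

lemma not_leftOf_add_three_add_one (i : ZMod 7) (h : C.LeftOf (i, 0) (i + 3, 0)) :
    ¬C.LeftOf (i + 3, 0) (i + 1, 0) := by
  have e : i + 3 - 2 = i + 1 := by ring
  simpa [e] using (C.comap (GGraph.reflect 7 (i + 3)).toEmbedding).not_leftOf_add_two 0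
    (by simpa using h)

lemma leftOf_add_one_add_three (i : ZMod 7) (h : C.LeftOf (i, 0) (i + 2, 0)) :
    C.LeftOf (i + 1, 0) (i + 3, 0) := by
  have h13 : ∀ j : ZMod 7, (GGraph 7)ᶜ.Adj (j + 1, 0) (j + 3, 0) := by decide
  have h03 : ∀ j : ZMod 7, (GGraph 7)ᶜ.Adj (j, 0) (j + 3, 0) := by decide
  refine (C.leftOf_or_leftOf (h13 i)).resolve_right fun h₃₁ => ?_
  rcases C.leftOf_or_leftOf (h03 i) with h₀₃ | h₃₀
  · exact C.not_leftOf_add_three_add_one i h₀₃ h₃₁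
  · exact C.not_leftOf_add_two i h₃₀ h

lemma not_leftOf_zero_two : ¬C.LeftOf (0, 0) (2, 0) := by
  intro h
  have hall (i : ZMod 7) : C.LeftOf (i, 0) (i + 2, 0) := by
    obtain ⟨k, rfl⟩ := ZMod.natCast_zmod_surjective i
    induction k with
    | zero => simpa using h
    | succ k ih =>
      have e : (k : ZMod 7) + 3 = k + 1 + 2 := by ring
      simpa [e] using C.leftOf_add_one_add_three _ ih
  exact not_forall_lt_add (isOfFinAddOrder_of_finite (2 : ZMod 7)) (fun i => C.right (i, 0))
    fun i => (hall i).1.trans_le (C.left_le_right _)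

end StarCoords

theorem isEmpty_starCoords_G7 : IsEmpty (StarCoords (GGraph 7)) := by
  refine ⟨fun C => ?_⟩
  rcases C.leftOf_or_leftOf (u := (0, 0)) (v := (2, 0)) (by decide) with h | h
  · exact C.not_leftOf_zero_two h
  · exact (C.comap (GGraph.reflect 7 2).toEmbedding).not_leftOf_zero_two (by simpa using h)

theorem not_exists_isIPSEGStarModel_G7 : ¬∃ s, IsIPSEGStarModel (GGraph 7) s := by
  rintro ⟨s, hs⟩
  obtain ⟨C⟩ := hs.nonempty_starCoords
  exact isEmpty_starCoords_G7.false C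

/-- The graph `G₇` is an IP-SEG graph. Consequently the class of IP-SEG* graphs is
properly contained in the class of IP-SEG graphs: every IP-SEG* graph is IP-SEG, and
some (finite) IP-SEG graph is not an IP-SEG* graph. -/
theorem G7_ipseg_and_proper_containment :
    (∃ s : ZMod 7 × Fin 3 → IPSeg, IsIPSEGModel (GGraph 7) s) ∧
    (∀ (V : Type) (G : SimpleGraph V),
      (∃ s : V → IPSeg, IsIPSEGStarModel G s) → ∃ s : V → IPSeg, IsIPSEGModel G s) ∧
    (∃ (V : Type) (_ : Fintype V) (G : SimpleGraph V),
      (∃ s : V → IPSeg, IsIPSEGModel G s) ∧ ¬ ∃ s : V → IPSeg, IsIPSEGStarModel G s) :=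
  ⟨⟨_, isIPSEGModel_g7Segments⟩, fun _ _ ⟨s, hs⟩ => ⟨s, hs.1⟩,
    ZMod 7 × Fin 3, inferInstance, GGraph 7, ⟨_, isIPSEGModel_g7Segments⟩,
    not_exists_isIPSEGStarModel_G7⟩
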